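/- Assume 0 ≤ λ < 1 and that there exists T ∈ ℕ with c_τ = 0 and u_τ = 0 for all τ > T. Then the λ-weighted synthetic gradient G_t^λ := (1−λ) Σ_{n=1}^{∞} λ^{n−1} G_t^{(n)} (a convergent series, since G_t^{(n)} is eventually constant in n) satisfies the recursive identity G_t^λ = c_{t+1} P(t+1,t) + γλ G_{t+1}^λ P(t+1,t) + γ(1−λ) u_{t+1} P(t+1,t) for every t. -/

import Mathlib

/-!
Splitting off the first factor of the propagator gives
`G_t^{(n+1)} = c_{t+1} P(t+1,t) + γ G_{t+1}^{(n)} P(t+1,t)`. All series converge because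
`G_a^{(n)}` is constant in `n` once `n > T`. Summing against `λ^n` yields
`Σ λ^n G_t^{(n+1)} = c_{t+1} P(t+1,t) / (1-λ) + γ (Σ λ^n G_{t+1}^{(n)}) P(t+1,t)`, and the last
series is `u_{t+1} + λ Σ λ^n G_{t+1}^{(n+1)}` since `G_{t+1}^{(0)} = u_{t+1}`; multiplying by
`1 - λ` gives the recursion.
-/

open Finset Matrix

noncomputable section

/-- Propagator `Pfrom J a n = P(a+n, a) = J_{a+n-1} ⋯ J_a`. -/
def Pfrom {d : ℕ} (J : ℕ → Matrix (Fin d) (Fin d) ℝ) (a : ℕ) : ℕ → Matrix (Fin d) (Fin d) ℝ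
  | 0 => 1
  | n + 1 => J (a + n) * Pfrom J a n

/-- Propagator `P J b a = P(b, a) = J_{b-1} ⋯ J_a` (for `b ≥ a`). -/
def P {d : ℕ} (J : ℕ → Matrix (Fin d) (Fin d) ℝ) (b a : ℕ) : Matrix (Fin d) (Fin d) ℝ :=
  Pfrom J a (b - a)

/-- The n-step synthetic gradient `G_a^{(n)}`. -/
def Gn {d : ℕ} (γ : ℝ) (J : ℕ → Matrix (Fin d) (Fin d) ℝ) (c u : ℕ → Fin d → ℝ)
    (a n : ℕ) : Fin d → ℝ :=
  (∑ k ∈ Finset.range n, γ ^ k • Matrix.vecMul (c (a + k + 1)) (P J (a + k + 1) a))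
    + γ ^ n • Matrix.vecMul (u (a + n)) (P J (a + n) a)

/-- The interim λ-weighted synthetic gradient `G_a^{λ|H}`. -/
def GLam {d : ℕ} (γ lam : ℝ) (J : ℕ → Matrix (Fin d) (Fin d) ℝ) (c u : ℕ → Fin d → ℝ)
    (a H : ℕ) : Fin d → ℝ :=
  (1 - lam) • (∑ n ∈ Finset.range (H - a - 1), lam ^ n • Gn γ J c u a (n + 1))
    + lam ^ (H - a - 1) • Gn γ J c u a (H - a)

/-- The modified temporal-difference error `δ'_{a,t}`. -/
def δ' {d : ℕ} (γ : ℝ) (J : ℕ → Matrix (Fin d) (Fin d) ℝ) (c u : ℕ → Fin d → ℝ)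
    (a t : ℕ) : Fin d → ℝ :=
  Matrix.vecMul (c (t + 1) + γ • u (t + 1)) (P J (t + 1) a) - Matrix.vecMul (u t) (P J t a)

/-- The temporal-difference error `δ_t`. -/
def δtd {d : ℕ} (γ : ℝ) (J : ℕ → Matrix (Fin d) (Fin d) ℝ) (c u w : ℕ → Fin d → ℝ)
    (t : ℕ) : Fin d → ℝ :=
  Matrix.vecMul (c (t + 1) + γ • u (t + 1)) (P J (t + 1) t) - w t

/-- `δ_{a,t} = δ_t P(t,a)`. -/
def δab {d : ℕ} (γ : ℝ) (J : ℕ → Matrix (Fin d) (Fin d) ℝ) (c u w : ℕ → Fin d → ℝ)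
    (a t : ℕ) : Fin d → ℝ :=
  Matrix.vecMul (δtd γ J c u w t) (P J t a)

section Series

variable {E : Type*} [AddCommGroup E] [Module ℝ E] [TopologicalSpace E]
  [IsTopologicalAddGroup E] [ContinuousSMul ℝ E]

theorem summable_pow_smul_of_eventually_const {lam : ℝ} (hlam : |lam| < 1) {f : ℕ → E}
    {N : ℕ} {L : E} (hf : ∀ n, N ≤ n → f n = L) :
    Summable fun n => lam ^ n • f n := by
  refine ((summable_geometric_of_abs_lt_one hlam).smul_const L).congr_atTop ?_
  filter_upwards [Filter.eventually_ge_atTop N] with n hn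
  rw [hf n hn]

theorem tsum_pow_smul_eq_add_smul_tsum_succ [T2Space E] {lam : ℝ} {f : ℕ → E}
    (hf : Summable fun n => lam ^ n • f n) :
    ∑' n, lam ^ n • f n = f 0 + lam • ∑' n, lam ^ n • f (n + 1) := by
  rw [hf.tsum_eq_zero_add, pow_zero, one_smul, ← tsum_const_smul'']
  simp only [smul_smul, pow_succ']

end Series

theorem HasSum.vecMul {ι m n : Type*} [Fintype m] {f : ι → m → ℝ} {s : m → ℝ} (hf : HasSum f s)
    (M : Matrix m n ℝ) : HasSum (fun i => f i ᵥ* M) (s ᵥ* M) :=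
  hf.mapL (Matrix.vecMulLinear M).toContinuousLinearMap

section Propagator

variable {d : ℕ} (J : ℕ → Matrix (Fin d) (Fin d) ℝ)

theorem Pfrom_add (a m n : ℕ) : Pfrom J a (m + n) = Pfrom J (a + n) m * Pfrom J a n := by
  induction m with
  | zero => simp [Pfrom]
  | succ m ih =>
    rw [Nat.add_right_comm, Pfrom, ih, Pfrom, Matrix.mul_assoc, Nat.add_assoc, Nat.add_comm n]

theorem P_mul {a b e : ℕ} (hab : a ≤ b) (hbe : b ≤ e) : P J e b * P J b a = P J e a := by
  obtain ⟨k, rfl⟩ := Nat.exists_eq_add_of_le hab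
  obtain ⟨l, rfl⟩ := Nat.exists_eq_add_of_le hbe
  rw [P, P, P, show a + k + l - (a + k) = l by omega, show a + k - a = k by omega,
    show a + k + l - a = l + k by omega, Pfrom_add]

end Propagator

section SyntheticGradient

variable {d : ℕ} (γ : ℝ) (J : ℕ → Matrix (Fin d) (Fin d) ℝ) (c u : ℕ → Fin d → ℝ)

theorem Gn_zero (a : ℕ) : Gn γ J c u a 0 = u a := by
  simp [Gn, P, Pfrom]

theorem Gn_succ (a n : ℕ) :
    Gn γ J c u a (n + 1) = c (a + 1) ᵥ* P J (a + 1) a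
      + γ • (Gn γ J c u (a + 1) n ᵥ* P J (a + 1) a) := by
  have hP {b : ℕ} (hb : a + 1 ≤ b) (v : Fin d → ℝ) :
      v ᵥ* P J b (a + 1) ᵥ* P J (a + 1) a = v ᵥ* P J b a := by
    rw [vecMul_vecMul, P_mul J (by omega) hb]
  simp (disch := omega) only [Gn, Finset.sum_range_succ', add_vecMul, sum_vecMul, smul_vecMul,
    hP, smul_add, Finset.smul_sum, smul_smul, ← pow_succ', pow_zero, one_smul, ← Nat.add_assoc,
    Nat.add_right_comm a 1]
  abel

theorem Gn_eq_of_le {T : ℕ} (hc : ∀ τ, T < τ → c τ = 0) (hu : ∀ τ, T < τ → u τ = 0)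
    (a n : ℕ) (hn : T + 1 ≤ n) :
    Gn γ J c u a n = Gn γ J c u a (T + 1) := by
  induction n, hn using Nat.le_induction with
  | base => rfl
  | succ n hn ih =>
    rw [← ih, Gn, Gn, Finset.sum_range_succ, hc (a + n + 1) (by omega), hu (a + n) (by omega),
      hu (a + (n + 1)) (by omega)]
    simp

theorem hasSum_pow_smul_Gn_succ {lam : ℝ} (hlam : |lam| < 1) (t : ℕ) {S : Fin d → ℝ}
    (hS : HasSum (fun n => lam ^ n • Gn γ J c u (t + 1) n) S) :
    HasSum (fun n => lam ^ n • Gn γ J c u t (n + 1))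
      ((1 - lam)⁻¹ • (c (t + 1) ᵥ* P J (t + 1) t) + γ • (S ᵥ* P J (t + 1) t)) := by
  convert ((hasSum_geometric_of_abs_lt_one hlam).smul_const _).add
    ((hS.vecMul (P J (t + 1) t)).const_smul γ) using 2 with n
  rw [Gn_succ, smul_add, smul_vecMul, smul_comm]

end SyntheticGradient

/-- assuming `0 ≤ λ < 1` and that `c_τ = 0` and `u_τ = 0` for all
`τ > T`, the λ-weighted synthetic gradient `G_t^λ := (1−λ) Σ_{n=1}^∞ λ^{n−1} G_t^{(n)}`
is given by a convergent series and satisfies the recursive identity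
`G_t^λ = c_{t+1} P(t+1,t) + γλ G_{t+1}^λ P(t+1,t) + γ(1−λ) u_{t+1} P(t+1,t)`. -/
theorem lambda_SG_recursive {d : ℕ} (γ lam : ℝ) (hlam0 : 0 ≤ lam) (hlam1 : lam < 1)
    (J : ℕ → Matrix (Fin d) (Fin d) ℝ) (c u : ℕ → Fin d → ℝ)
    (T : ℕ) (hc : ∀ τ, T < τ → c τ = 0) (hu : ∀ τ, T < τ → u τ = 0) (t : ℕ) :
    Summable (fun n : ℕ => lam ^ n • Gn γ J c u t (n + 1)) ∧
    (1 - lam) • ∑' n : ℕ, lam ^ n • Gn γ J c u t (n + 1)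
      = Matrix.vecMul (c (t + 1)) (P J (t + 1) t)
        + (γ * lam) •
            Matrix.vecMul ((1 - lam) • ∑' n : ℕ, lam ^ n • Gn γ J c u (t + 1) (n + 1))
              (P J (t + 1) t)
        + (γ * (1 - lam)) • Matrix.vecMul (u (t + 1)) (P J (t + 1) t) := by
  have hlam : |lam| < 1 := abs_lt.2 ⟨by linarith, hlam1⟩
  have hG : Summable fun n => lam ^ n • Gn γ J c u (t + 1) n :=
    summable_pow_smul_of_eventually_const hlam (Gn_eq_of_le γ J c u hc hu (t + 1))
  have hG_succ : Summable fun n => lam ^ n • Gn γ J c u t (n + 1) :=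
    summable_pow_smul_of_eventually_const (N := T) hlam fun n hn =>
      Gn_eq_of_le γ J c u hc hu t (n + 1) (by omega)
  refine ⟨hG_succ, ?_⟩
  rw [(hasSum_pow_smul_Gn_succ γ J c u hlam t hG.hasSum).tsum_eq,
    tsum_pow_smul_eq_add_smul_tsum_succ hG, Gn_zero, add_vecMul, smul_vecMul, smul_vecMul,
    smul_add, smul_smul, mul_inv_cancel₀ (by linarith : (1 : ℝ) - lam ≠ 0), one_smul]
  module

end
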